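/- arXiv:2105.03893 — 2 statements merged into one kernel-verified Lean document; each statement's English description precedes it below -/
import Mathlib

section
/- Let ω be a random vector in ℝ^d with an arbitrary distribution, and let b be an independent random variable uniformly distributed on (0, 2π). Then for all x, x' ∈ ℝ^d, E[cos(ωᵀ(x − x'))] = E[2 cos(ωᵀ x + b) cos(ωᵀ x' + b)]. -/
open MeasureTheory ProbabilityTheory

/-!
By independence, the right-hand side is an iterated integral whose inner integral runs over the
uniform law of `b`. For fixed `ω`, the product-to-sum formula gives
`2 cos (u + t) cos (v + t) = cos (u - v) + cos (u + v + 2 t)`, and the second term integrates to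
zero over the full period `(0, 2π)`.
-/

open Real

theorem integral_ofReal_smul_restrict_Ioo {r a b : ℝ} (hr : 0 ≤ r) (hab : a ≤ b) (g : ℝ → ℝ) :
    ∫ t, g t ∂(ENNReal.ofReal r • volume.restrict (Set.Ioo a b)) = r * ∫ t in a..b, g t := by
  rw [integral_smul_measure, intervalIntegral.integral_of_le hab, integral_Ioc_eq_integral_Ioo,
    ENNReal.toReal_ofReal hr, smul_eq_mul]

theorem integral_cos_add_nat_mul_eq_zero (a : ℝ) {n : ℕ} (hn : n ≠ 0) :
    ∫ t in (0 : ℝ)..2 * π, cos (a + n * t) = 0 := by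
  have hn' : (n : ℝ) ≠ 0 := Nat.cast_ne_zero.mpr hn
  simp [intervalIntegral.integral_comp_add_mul _ hn', sin_add_nat_mul_two_pi]

theorem two_mul_cos_add_mul_cos_add (u v t : ℝ) :
    2 * cos (u + t) * cos (v + t) = cos (u - v) + cos (u + v + 2 * t) := by
  rw [cos_add, cos_add v, cos_sub, cos_add (u + v), cos_add u, sin_add u, cos_two_mul, sin_two_mul]
  linear_combination 2 * sin u * sin v * sin_sq_add_cos_sq t

theorem integral_two_mul_cos_add_mul_cos_add_uniform (u v : ℝ) :
    ∫ t, 2 * cos (u + t) * cos (v + t)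
        ∂(ENNReal.ofReal (2 * π)⁻¹ • volume.restrict (Set.Ioo 0 (2 * π))) = cos (u - v) := by
  have hcont : Continuous fun t => cos (u + v + 2 * t) := by fun_prop
  have hperiod : ∫ t in (0 : ℝ)..2 * π, cos (u + v + 2 * t) = 0 := by
    exact_mod_cast integral_cos_add_nat_mul_eq_zero (u + v) two_ne_zero
  rw [integral_ofReal_smul_restrict_Ioo (by positivity) two_pi_pos.le]
  simp_rw [two_mul_cos_add_mul_cos_add]
  rw [intervalIntegral.integral_add intervalIntegrable_const (hcont.intervalIntegrable _ _),
    hperiod, intervalIntegral.integral_const, smul_eq_mul]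
  field_simp
  ring

theorem integral_comp_eq_integral_integral_of_indepFun {Ω α β E : Type*} [MeasurableSpace Ω]
    [MeasurableSpace α] [MeasurableSpace β] [NormedAddCommGroup E] [NormedSpace ℝ E]
    {P : Measure Ω} [IsFiniteMeasure P] {X : Ω → α} {Y : Ω → β}
    (hX : AEMeasurable X P) (hY : AEMeasurable Y P) (hXY : IndepFun X Y P) {F : α → β → E}
    (hF : Integrable (Function.uncurry F) ((P.map X).prod (P.map Y))) :
    ∫ a, F (X a) (Y a) ∂P = ∫ x, ∫ y, F x y ∂(P.map Y) ∂(P.map X) := by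
  have hmap := (indepFun_iff_map_prod_eq_prod_map_map hX hY).mp hXY
  calc ∫ a, F (X a) (Y a) ∂P = ∫ p, Function.uncurry F p ∂(P.map fun a => (X a, Y a)) :=
        (integral_map (hX.prodMk hY) (hmap ▸ hF.1)).symm
    _ = ∫ x, ∫ y, F x y ∂(P.map Y) ∂(P.map X) := by rw [hmap]; exact integral_prod _ hF

/-- Random Fourier features identity: if `ω` is a random vector in `ℝ^d` with arbitrary
distribution and `b` is an independent random variable uniformly distributed on `(0, 2π)`,
then `E[cos(ωᵀ(x − x'))] = E[2 cos(ωᵀx + b) cos(ωᵀx' + b)]`. -/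
theorem rff_expectation_identity
    {Ω : Type*} [MeasurableSpace Ω] (P : Measure Ω) [IsProbabilityMeasure P]
    (d : ℕ) (ω : Ω → (Fin d → ℝ)) (b : Ω → ℝ)
    (hω : Measurable ω) (hb : Measurable b)
    (hindep : IndepFun ω b P)
    (hbunif : Measure.map b P =
      (ENNReal.ofReal (2 * Real.pi)⁻¹) •
        volume.restrict (Set.Ioo 0 (2 * Real.pi)))
    (x x' : Fin d → ℝ) :
    ∫ a, Real.cos (∑ i, ω a i * (x i - x' i)) ∂P =
      ∫ a, 2 * Real.cos ((∑ i, ω a i * x i) + b a) *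
            Real.cos ((∑ i, ω a i * x' i) + b a) ∂P := by
  have hF : Integrable (Function.uncurry fun (w : Fin d → ℝ) t =>
      2 * cos (∑ i, w i * x i + t) * cos (∑ i, w i * x' i + t)) ((P.map ω).prod (P.map b)) := by
    refine Integrable.of_bound (by fun_prop) 2 (.of_forall fun p => ?_)
    simp only [Function.uncurry, norm_mul, Real.norm_ofNat, norm_eq_abs]
    nlinarith [abs_cos_le_one (∑ i, p.1 i * x i + p.2), abs_cos_le_one (∑ i, p.1 i * x' i + p.2),
      abs_nonneg (cos (∑ i, p.1 i * x i + p.2))]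
  have hcos : Continuous fun w : Fin d → ℝ => cos (∑ i, w i * (x i - x' i)) := by fun_prop
  rw [integral_comp_eq_integral_integral_of_indepFun hω.aemeasurable hb.aemeasurable hindep hF,
    hbunif]
  simp_rw [integral_two_mul_cos_add_mul_cos_add_uniform, ← Finset.sum_sub_distrib, ← mul_sub]
  exact (integral_map hω.aemeasurable hcos.aestronglyMeasurable).symm
end

section
/- For fixed x, x' ∈ ℝ^d with x ≠ x', the Matérn covariance K_Matern(x, x'; ν) = (τ²/(Γ(ν) 2^{ν−1})) (√(2ν) r/η)^ν 𝖪_ν(√(2ν) r/η) with r = ‖x − x'‖ converges, as ν → ∞, to the Gaussian covariance τ² exp(−r²/(2η²)). -/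
open Real MeasureTheory

/-- Modified Bessel function of the second kind, via its integral representation
`𝖪_ν(z) = ∫₀^∞ exp(−z cosh t) cosh(ν t) dt` (valid for `z > 0`). -/
noncomputable def besselK (ν z : ℝ) : ℝ :=
  ∫ t in Set.Ioi (0 : ℝ), Real.exp (-z * Real.cosh t) * Real.cosh (ν * t)

/-- Matérn covariance function with smoothness `ν`, variance `τ²`, length scale `η`,
evaluated at distance `r`. -/
noncomputable def maternCov (τ η ν r : ℝ) : ℝ :=
  τ ^ 2 / (Real.Gamma ν * 2 ^ (ν - 1)) * (Real.sqrt (2 * ν) * r / η) ^ ν *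
    besselK ν (Real.sqrt (2 * ν) * r / η)

/-!
Substituting `u = (z / 2) eᵗ` in the integral defining `𝖪_ν` gives
`∫₀^∞ u^(ν-1) e^(-u) e^(-z²/(4u)) du = 2 (z/2)^ν 𝖪_ν(z)`. With `z = √(2ν) r / η` and
`b = r² / (2η²)` this turns the Matérn covariance into `τ² 𝔼[exp(-b / (U / ν))]` for
`U ~ Gamma(ν, 1)`. As `U / ν` has mean `1` and variance `1 / ν`, it concentrates at `1`
(Chebyshev), and `s ↦ exp(-b / s)` is bounded on `(0, ∞)` and continuous at `1`, so the
expectation tends to `exp(-b)`.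
-/

open Set Filter Topology

/-- The mean of `f` under the Gamma(ν, 1) distribution. -/
noncomputable def gammaAverage (ν : ℝ) (f : ℝ → ℝ) : ℝ :=
  (∫ u in Ioi 0, exp (-u) * u ^ (ν - 1) * f u) / Gamma ν

lemma abs_exp_div_le_one {a s : ℝ} (ha : a ≤ 0) (hs : 0 < s) : |exp (a / s)| ≤ 1 := by
  rw [abs_of_pos (exp_pos _), exp_le_one_iff]
  exact div_nonpos_of_nonpos_of_nonneg ha hs.le

section GammaAverage

variable {ν : ℝ}

lemma integrableOn_gamma_integrand_mul {f : ℝ → ℝ} {M : ℝ} (hν : 0 < ν)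
    (hf : AEStronglyMeasurable f (volume.restrict (Ioi 0))) (hM : ∀ u ∈ Ioi 0, |f u| ≤ M) :
    IntegrableOn (fun u => exp (-u) * u ^ (ν - 1) * f u) (Ioi 0) :=
  (GammaIntegral_convergent hν).mul_bdd hf <|
    (ae_restrict_mem measurableSet_Ioi).mono fun u hu => hM u hu

lemma sq_sub_mul_gamma_integrand {u : ℝ} (hu : 0 < u) :
    (u - ν) ^ 2 * (exp (-u) * u ^ (ν - 1)) =
      exp (-u) * u ^ (ν + 2 - 1) - 2 * ν * (exp (-u) * u ^ (ν + 1 - 1)) +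
        ν ^ 2 * (exp (-u) * u ^ (ν - 1)) := by
  rw [show ν + 2 - 1 = ν - 1 + 1 + 1 by ring, show ν + 1 - 1 = ν - 1 + 1 by ring,
    rpow_add_one hu.ne', rpow_add_one hu.ne']
  ring

lemma integrableOn_sq_sub_mul_gamma_integrand (hν : 0 < ν) :
    IntegrableOn (fun u => (u - ν) ^ 2 * (exp (-u) * u ^ (ν - 1))) (Ioi 0) :=
  (((GammaIntegral_convergent (by linarith)).sub
    ((GammaIntegral_convergent (by linarith)).const_mul (2 * ν))).add
      ((GammaIntegral_convergent hν).const_mul (ν ^ 2))).congr_fun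
    (fun _ hu => (sq_sub_mul_gamma_integrand hu).symm) measurableSet_Ioi

lemma integral_sq_sub_mul_gamma_integrand (hν : 0 < ν) :
    ∫ u in Ioi 0, (u - ν) ^ 2 * (exp (-u) * u ^ (ν - 1)) = ν * Gamma ν := by
  have h2 := GammaIntegral_convergent (by linarith : 0 < ν + 2)
  have h1 := (GammaIntegral_convergent (by linarith : 0 < ν + 1)).const_mul (2 * ν)
  have h0 := (GammaIntegral_convergent hν).const_mul (ν ^ 2)
  have h21 : IntegrableOn (fun u => exp (-u) * u ^ (ν + 2 - 1) -
      2 * ν * (exp (-u) * u ^ (ν + 1 - 1))) (Ioi 0) := h2.sub h1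
  rw [setIntegral_congr_fun measurableSet_Ioi fun _ hu => sq_sub_mul_gamma_integrand hu,
    integral_add h21 h0, integral_sub h2 h1, integral_const_mul, integral_const_mul,
    ← Gamma_eq_integral (by linarith), ← Gamma_eq_integral (by linarith),
    ← Gamma_eq_integral hν, show ν + 2 = ν + 1 + 1 by ring, Gamma_add_one (by linarith),
    Gamma_add_one hν.ne']
  ring

lemma abs_gammaAverage_comp_div_sub_le {f : ℝ → ℝ} {M ε δ : ℝ} (hν : 0 < ν) (hδ : 0 < δ)
    (hfm : Measurable f) (hM : ∀ s ∈ Ioi 0, |f s| ≤ M)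
    (hε : ∀ s, |s - 1| < δ → |f s - f 1| ≤ ε) :
    |gammaAverage ν (fun u => f (u / ν)) - f 1| ≤ ε + 2 * M / δ ^ 2 / ν := by
  have hG := Gamma_pos_of_pos hν
  have hsq := integrableOn_sq_sub_mul_gamma_integrand hν
  have hw := GammaIntegral_convergent hν
  have hfν : IntegrableOn (fun u => exp (-u) * u ^ (ν - 1) * f (u / ν)) (Ioi 0) :=
    integrableOn_gamma_integrand_mul hν (hfm.comp (measurable_id.div_const ν)).aestronglyMeasurable
      fun u hu => hM _ (div_pos hu hν)
  set c := 2 * M / (δ * ν) ^ 2 with hc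
  have hpt : ∀ u ∈ Ioi (0 : ℝ), ‖exp (-u) * u ^ (ν - 1) * f (u / ν) -
      exp (-u) * u ^ (ν - 1) * f 1‖ ≤
        ε * (exp (-u) * u ^ (ν - 1)) + c * ((u - ν) ^ 2 * (exp (-u) * u ^ (ν - 1))) := by
    intro u hu
    have hw0 : 0 ≤ exp (-u) * u ^ (ν - 1) := by have : (0 : ℝ) < u := hu; positivity
    have hM0 : 0 ≤ M := (abs_nonneg _).trans (hM 1 (mem_Ioi.2 one_pos))
    have hε0 : 0 ≤ ε := by simpa using hε 1 (by simpa using hδ)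
    -- Chebyshev: off the window `|u / ν - 1| < δ` the factor `((u - ν) / (δ * ν)) ^ 2` is `≥ 1`.
    have hdev : |f (u / ν) - f 1| ≤ ε + c * (u - ν) ^ 2 := by
      by_cases hnear : |u / ν - 1| < δ
      · have : 0 ≤ c * (u - ν) ^ 2 := by positivity
        linarith [hε _ hnear]
      · have hfar : (δ * ν) ^ 2 ≤ (u - ν) ^ 2 := by
          rw [← sq_abs (u - ν)]
          refine pow_le_pow_left₀ (by positivity) ?_ 2
          rwa [div_sub_one hν.ne', abs_div, abs_of_pos hν, not_lt, le_div_iff₀ hν] at hnear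
        have h2M : 2 * M ≤ c * (u - ν) ^ 2 := by
          rw [div_mul_eq_mul_div, le_div_iff₀ (by positivity)]
          exact mul_le_mul_of_nonneg_left hfar (by positivity)
        have := abs_sub (f (u / ν)) (f 1)
        linarith [hM _ (div_pos hu hν), hM 1 (mem_Ioi.2 one_pos)]
    calc ‖exp (-u) * u ^ (ν - 1) * f (u / ν) - exp (-u) * u ^ (ν - 1) * f 1‖
        = exp (-u) * u ^ (ν - 1) * |f (u / ν) - f 1| := by
          rw [Real.norm_eq_abs, ← mul_sub, abs_mul, abs_of_nonneg hw0]
      _ ≤ exp (-u) * u ^ (ν - 1) * (ε + c * (u - ν) ^ 2) := by gcongr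
      _ = _ := by ring
  have hmajor : IntegrableOn (fun u => ε * (exp (-u) * u ^ (ν - 1)) +
      c * ((u - ν) ^ 2 * (exp (-u) * u ^ (ν - 1)))) (Ioi 0) :=
    (hw.const_mul ε).add (hsq.const_mul c)
  calc |gammaAverage ν (fun u => f (u / ν)) - f 1|
      = |∫ u in Ioi 0, (exp (-u) * u ^ (ν - 1) * f (u / ν) - exp (-u) * u ^ (ν - 1) * f 1)|
          / Gamma ν := by
        rw [integral_sub hfν (hw.mul_const _), integral_mul_const, ← Gamma_eq_integral hν,
          gammaAverage, div_sub' hG.ne', abs_div, abs_of_pos hG]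
    _ ≤ (∫ u in Ioi 0, (ε * (exp (-u) * u ^ (ν - 1)) +
          c * ((u - ν) ^ 2 * (exp (-u) * u ^ (ν - 1))))) / Gamma ν := by
        gcongr
        exact norm_integral_le_of_norm_le hmajor
          ((ae_restrict_mem measurableSet_Ioi).mono hpt)
    _ = ε + 2 * M / δ ^ 2 / ν := by
        rw [integral_add (hw.const_mul ε) (hsq.const_mul c), integral_const_mul,
          integral_const_mul, ← Gamma_eq_integral hν, integral_sq_sub_mul_gamma_integrand hν, hc]
        field_simp

theorem tendsto_gammaAverage_comp_div {f : ℝ → ℝ} {M : ℝ} (hfm : Measurable f)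
    (hM : ∀ s ∈ Ioi 0, |f s| ≤ M) (hf : ContinuousAt f 1) :
    Tendsto (fun ν => gammaAverage ν (fun u => f (u / ν))) atTop (𝓝 (f 1)) := by
  refine Metric.tendsto_nhds.2 fun ε hε => ?_
  obtain ⟨δ, hδ, hfδ⟩ := Metric.continuousAt_iff.1 hf (ε / 2) (half_pos hε)
  have hrem : Tendsto (fun ν => 2 * M / δ ^ 2 / ν) atTop (𝓝 0) :=
    tendsto_const_nhds.div_atTop tendsto_id
  filter_upwards [eventually_gt_atTop 0, hrem.eventually (gt_mem_nhds (half_pos hε))]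
    with ν hν hνrem
  have := abs_gammaAverage_comp_div_sub_le hν hδ hfm hM fun s hs => (hfδ hs).le
  rw [Real.dist_eq]
  linarith

end GammaAverage

section ExpSubstitution

variable {E : Type*} [NormedAddCommGroup E] [NormedSpace ℝ E] {c : ℝ}

lemma image_const_mul_exp_univ (hc : 0 < c) : (fun t => c * exp t) '' univ = Ioi 0 := by
  rw [image_univ, range_comp' (c * ·) exp, range_exp, image_const_mul_Ioi_zero hc]

lemma integral_comp_const_mul_exp (hc : 0 < c) (g : ℝ → E) :
    ∫ t, (c * exp t) • g (c * exp t) = ∫ u in Ioi 0, g u := by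
  rw [← image_const_mul_exp_univ hc, integral_image_eq_integral_abs_deriv_smul MeasurableSet.univ
    (fun t _ => ((hasDerivAt_exp t).const_mul c).hasDerivWithinAt)
    (fun s _ t _ h => exp_injective (mul_left_cancel₀ hc.ne' h)), setIntegral_univ]
  simp_rw [abs_of_pos (mul_pos hc (exp_pos _))]

lemma integrable_comp_const_mul_exp_iff (hc : 0 < c) (g : ℝ → E) :
    Integrable (fun t => (c * exp t) • g (c * exp t)) ↔ IntegrableOn g (Ioi 0) := by
  rw [← image_const_mul_exp_univ hc, integrableOn_image_iff_integrableOn_abs_deriv_smul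
    MeasurableSet.univ (fun t _ => ((hasDerivAt_exp t).const_mul c).hasDerivWithinAt)
    (fun s _ t _ h => exp_injective (mul_left_cancel₀ hc.ne' h)), integrableOn_univ]
  simp_rw [abs_of_pos (mul_pos hc (exp_pos _))]

end ExpSubstitution

lemma integral_exp_mul_mul_exp_neg_mul_cosh {ν z : ℝ}
    (hint : Integrable fun t => exp (ν * t) * exp (-z * cosh t)) :
    ∫ t, exp (ν * t) * exp (-z * cosh t) = 2 * besselK ν z := by
  have hsym : ∀ t, exp (ν * t) * exp (-z * cosh t) + exp (ν * -t) * exp (-z * cosh (-t)) =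
      2 * (exp (-z * cosh |t|) * cosh (ν * |t|)) := by
    intro t
    rcases abs_choice t with h | h <;>
    · simp only [h, mul_neg, cosh_neg]
      rw [cosh_eq (ν * t)]
      ring
  calc ∫ t, exp (ν * t) * exp (-z * cosh t)
      = ((∫ t, exp (ν * t) * exp (-z * cosh t)) +
          ∫ t, exp (ν * -t) * exp (-z * cosh (-t))) / 2 := by
        rw [integral_neg_eq_self (fun t => exp (ν * t) * exp (-z * cosh t))]
        ring
    _ = ∫ t, exp (-z * cosh |t|) * cosh (ν * |t|) := by
        rw [← integral_add hint hint.comp_neg]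
        simp_rw [hsym, integral_const_mul]
        ring
    _ = 2 * besselK ν z := integral_comp_abs (f := fun t => exp (-z * cosh t) * cosh (ν * t))

lemma const_mul_exp_mul_gamma_integrand {ν z : ℝ} (hz : 0 < z) (t : ℝ) :
    z / 2 * exp t * (exp (-(z / 2 * exp t)) * (z / 2 * exp t) ^ (ν - 1) *
      exp (-(z ^ 2 / 4) / (z / 2 * exp t))) =
    (z / 2) ^ ν * (exp (ν * t) * exp (-z * cosh t)) := by
  set w := z / 2 * exp t with hw
  have hw0 : 0 < w := by positivity
  have hpow : w * w ^ (ν - 1) = (z / 2) ^ ν * exp (ν * t) := by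
    rw [rpow_sub_one hw0.ne', mul_div_cancel₀ _ hw0.ne', hw, mul_rpow (by positivity)
      (exp_pos t).le, ← exp_mul, mul_comm t]
  have hcosh : -w + -(z ^ 2 / 4) / w = -z * cosh t := by
    rw [hw, cosh_eq, exp_neg]
    field_simp
    ring
  calc w * (exp (-w) * w ^ (ν - 1) * exp (-(z ^ 2 / 4) / w))
      = w * w ^ (ν - 1) * exp (-w + -(z ^ 2 / 4) / w) := by rw [exp_add]; ring
    _ = _ := by rw [hpow, hcosh, mul_assoc]

lemma integral_gamma_integrand_mul_exp_neg_div {ν z : ℝ} (hν : 0 < ν) (hz : 0 < z) :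
    ∫ u in Ioi 0, exp (-u) * u ^ (ν - 1) * exp (-(z ^ 2 / 4) / u) =
      2 * (z / 2) ^ ν * besselK ν z := by
  have hc : 0 < z / 2 := half_pos hz
  have hint_u : IntegrableOn (fun u => exp (-u) * u ^ (ν - 1) * exp (-(z ^ 2 / 4) / u))
      (Ioi 0) :=
    integrableOn_gamma_integrand_mul hν (by fun_prop) fun u hu =>
      abs_exp_div_le_one (neg_nonpos.2 (by positivity)) hu
  have hint_t : Integrable fun t => exp (ν * t) * exp (-z * cosh t) := by
    rw [← integrable_comp_const_mul_exp_iff hc] at hint_u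
    simp_rw [smul_eq_mul, const_mul_exp_mul_gamma_integrand hz] at hint_u
    exact (integrable_const_mul_iff (isUnit_iff_ne_zero.2 (rpow_pos_of_pos hc ν).ne') _).1 hint_u
  rw [← integral_comp_const_mul_exp hc]
  simp_rw [smul_eq_mul, const_mul_exp_mul_gamma_integrand hz]
  rw [integral_const_mul, integral_exp_mul_mul_exp_neg_mul_cosh hint_t]
  ring

lemma maternCov_eq_gammaAverage {τ η ν r : ℝ} (hη : 0 < η) (hν : 0 < ν) (hr : 0 < r) :
    maternCov τ η ν r =
      τ ^ 2 * gammaAverage ν (fun u => exp (-r ^ 2 / (2 * η ^ 2) / (u / ν))) := by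
  set z := sqrt (2 * ν) * r / η with hz
  have hz0 : 0 < z := by positivity
  have hz2 : -(z ^ 2 / 4) = ν * (-r ^ 2 / (2 * η ^ 2)) := by
    rw [hz, div_pow, mul_pow, sq_sqrt (by positivity)]
    field_simp
    ring
  have hexp : ∀ u, exp (-r ^ 2 / (2 * η ^ 2) / (u / ν)) = exp (-(z ^ 2 / 4) / u) := by
    intro u
    rw [hz2, div_div_eq_mul_div, mul_comm]
  simp_rw [gammaAverage, hexp, integral_gamma_integrand_mul_exp_neg_div hν hz0, maternCov, ← hz,
    div_rpow hz0.le zero_le_two, rpow_sub_one two_ne_zero]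
  field_simp

theorem matern_tendsto_gaussian_general (d : ℕ) (τ η : ℝ) (hη : 0 < η)
    (x x' : EuclideanSpace ℝ (Fin d)) (hxx : x ≠ x') :
    Filter.Tendsto (fun ν => maternCov τ η ν ‖x - x'‖) Filter.atTop
      (nhds (τ ^ 2 * Real.exp (-‖x - x'‖ ^ 2 / (2 * η ^ 2)))) := by
  have hr : 0 < ‖x - x'‖ := norm_pos_iff.2 (sub_ne_zero.2 hxx)
  have hexponent : -‖x - x'‖ ^ 2 / (2 * η ^ 2) ≤ 0 := by
    rw [neg_div]
    exact neg_nonpos.2 (by positivity)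
  have hlim := tendsto_gammaAverage_comp_div (f := fun s => exp (-‖x - x'‖ ^ 2 / (2 * η ^ 2) / s))
    (by fun_prop) (fun s hs => abs_exp_div_le_one hexponent hs)
    (by fun_prop (disch := norm_num))
  rw [div_one] at hlim
  refine (hlim.const_mul (τ ^ 2)).congr' ?_
  filter_upwards [eventually_gt_atTop 0] with ν hν using
    (maternCov_eq_gammaAverage hη hν hr).symm

/-- As `ν → ∞`, the Matérn covariance converges to the Gaussian covariance
`τ² exp(−‖x − x'‖²/(2η²))`. -/
theorem matern_tendsto_gaussian (d : ℕ) (τ η : ℝ) (hτ : 0 < τ) (hη : 0 < η)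
    (x x' : EuclideanSpace ℝ (Fin d)) (hxx : x ≠ x') :
    Filter.Tendsto (fun ν => maternCov τ η ν ‖x - x'‖) Filter.atTop
      (nhds (τ ^ 2 * Real.exp (-‖x - x'‖ ^ 2 / (2 * η ^ 2)))) :=
  matern_tendsto_gaussian_general d τ η hη x x' hxx
end
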